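/- Let k be a commutative ring and H a bialgebra over k. For every n ∈ ℕ, the coradical filtration contains the primitive filtration: P_1(H)^n ⊆ P_n(H), where P_1(H)^n denotes the n-th power of the submodule P_1(H) under the multiplication of H (the submodule spanned by products of n elements of P_1(H), with P_1(H)^0 = k·1_H). -/

import Mathlib

open TensorProduct

noncomputable section

universe u

variable (R : Type u) [CommRing R]

/-- `Tpow R H n` is the `n`-th tensor power `H^{⊗n}` of the `R`-module `H`,
defined recursively by `H^{⊗0} = R` and `H^{⊗(n+1)} = H ⊗ H^{⊗n}`. -/
def Tpow (H : Type u) [AddCommGroup H] [Module R H] : ℕ → ModuleCat.{u} R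
  | 0 => ModuleCat.of R R
  | n + 1 => ModuleCat.of R (H ⊗[R] (Tpow H n))

variable {R}
variable {H : Type u} [AddCommGroup H] [Module R H]

/-- The iterated comultiplication `Δ^{(n)} : H → H^{⊗n}`:
`Δ^{(0)} = ε`, `Δ^{(1)} = id` (as the canonical map `H ≅ H ⊗ R`), and
`Δ^{(n+1)} = (Δ ⊗ id^{⊗(n−1)}) ∘ Δ^{(n)}`. -/
def iterComul (Δc : H →ₗ[R] H ⊗[R] H) (εc : H →ₗ[R] R) : (n : ℕ) → (H →ₗ[R] Tpow R H n)
  | 0 => εc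
  | 1 => (TensorProduct.rid R H).symm.toLinearMap
  | n + 2 =>
      (TensorProduct.assoc R H H (Tpow R H n)).toLinearMap
        ∘ₗ (LinearMap.rTensor (Tpow R H n) Δc)
        ∘ₗ (iterComul Δc εc (n + 1))

/-- The `n`-fold tensor power `e^{⊗n} : H^{⊗n} → H^{⊗n}` of a linear endomorphism `e`. -/
def mapPow (e : H →ₗ[R] H) : (n : ℕ) → (Tpow R H n →ₗ[R] Tpow R H n)
  | 0 => LinearMap.id
  | n + 1 => TensorProduct.map e (mapPow e n)

/-- `e_H := id − η ∘ ε`, where `η : R → H` is the coaugmentation `r ↦ r • u` sending `1` to `u`. -/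
def eAug (εc : H →ₗ[R] R) (u : H) : H →ₗ[R] H :=
  LinearMap.id - (LinearMap.toSpanSingleton R H u) ∘ₗ εc

/-- `δ^n := e_H^{⊗n} ∘ Δ^{(n)} : H → H^{⊗n}`. -/
def deltaPow (Δc : H →ₗ[R] H ⊗[R] H) (εc : H →ₗ[R] R) (u : H) (n : ℕ) :
    H →ₗ[R] Tpow R H n :=
  (mapPow (eAug εc u) n) ∘ₗ (iterComul Δc εc n)

/-- The `n`-th term `P_n(H) := ker (δ^{n+1})` of the coradical filtration. -/
def corad (Δc : H →ₗ[R] H ⊗[R] H) (εc : H →ₗ[R] R) (u : H) (n : ℕ) : Submodule R H :=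
  LinearMap.ker (deltaPow Δc εc u (n + 1))

/-!
If `p` satisfies `ε p = 0` and `Δ p = p ⊗ 1 + 1 ⊗ p`, then `Δ (p y) = (p ⊗ 1 + 1 ⊗ p) Δ y`, and
induction on `N` shows that `δ^{N+1} (p y)` is a linear function of `δ^{N+1} y` and `δ^N y`.
Every element of `P_1(H)` is such a `p` plus a multiple of `1`, so multiplication by `P_1(H)`
maps `P_{N-1}(H) ∩ P_N(H)` into `P_N(H)`; induction on `n` then gives `P_1(H)^n ⊆ P_N(H)` for all
`N ≥ n`.
-/

section Coalgebra

variable [Coalgebra R H]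

local notation "Δ" => Coalgebra.comul (R := R) (A := H)
local notation "ε" => Coalgebra.counit (R := R) (A := H)

theorem iterComul_succ (n : ℕ) :
    iterComul Δ ε (n + 1) = (iterComul Δ ε n).lTensor H ∘ₗ Δ := by
  induction n with
  | zero =>
    change (TensorProduct.rid R H).symm.toLinearMap = LinearMap.lTensor H ε ∘ₗ Δ
    rw [Coalgebra.lTensor_counit_comp_comul]
    rfl
  | succ n ih =>
    set f := iterComul Δ ε n
    have hrTensor : LinearMap.rTensor (Tpow R H n) Δ ∘ₗ iterComul Δ ε (n + 1)
        = f.lTensor (H ⊗[R] H) ∘ₗ LinearMap.rTensor H Δ ∘ₗ Δ := by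
      rw [ih, ← LinearMap.comp_assoc, LinearMap.rTensor_comp_lTensor,
        ← LinearMap.lTensor_comp_rTensor, LinearMap.comp_assoc]
    have hassoc : (TensorProduct.assoc R H H (Tpow R H n)).toLinearMap ∘ₗ f.lTensor (H ⊗[R] H)
        = (f.lTensor H).lTensor H ∘ₗ (TensorProduct.assoc R H H H).toLinearMap := by
      ext; rfl
    change (TensorProduct.assoc R H H (Tpow R H n)).toLinearMap
        ∘ₗ LinearMap.rTensor (Tpow R H n) Δ ∘ₗ iterComul Δ ε (n + 1) = _
    rw [hrTensor, ← LinearMap.comp_assoc, hassoc, LinearMap.comp_assoc, Coalgebra.coassoc,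
      ← LinearMap.comp_assoc, ← LinearMap.lTensor_comp, ← ih]
    rfl

variable {u : H}

local notation "e" => eAug ε u
local notation "δ" => deltaPow Δ ε u

theorem deltaPow_succ (n : ℕ) : δ (n + 1) = TensorProduct.map e (δ n) ∘ₗ Δ := by
  change mapPow e (n + 1) ∘ₗ iterComul Δ ε (n + 1) = _
  rw [iterComul_succ]
  change TensorProduct.map e (mapPow e n) ∘ₗ (iterComul Δ ε n).lTensor H ∘ₗ Δ = _
  rw [← LinearMap.comp_assoc, LinearMap.map_comp_lTensor]
  rfl

theorem deltaPow_succ_apply (n : ℕ) (x : H) : δ (n + 1) x = TensorProduct.map e (δ n) (Δ x) := by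
  rw [deltaPow_succ]
  rfl

theorem deltaPow_zero_apply (x : H) : δ 0 x = ε x := rfl

theorem deltaPow_one_apply (x : H) : δ 1 x = e x ⊗ₜ[R] (1 : R) := by
  change TensorProduct.map e LinearMap.id ((TensorProduct.rid R H).symm x) = _
  simp

theorem rTensor_eAug_comul (x : H) : LinearMap.rTensor H e (Δ x) = Δ x - u ⊗ₜ x := by
  rw [eAug, LinearMap.rTensor_sub, LinearMap.sub_apply, LinearMap.rTensor_id, LinearMap.id_apply,
    LinearMap.rTensor_comp, LinearMap.comp_apply, Coalgebra.rTensor_counit_comul,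
    LinearMap.rTensor_tmul, LinearMap.toSpanSingleton_apply, one_smul]

theorem lTensor_eAug_comul (x : H) : LinearMap.lTensor H e (Δ x) = Δ x - x ⊗ₜ u := by
  rw [eAug, LinearMap.lTensor_sub, LinearMap.sub_apply, LinearMap.lTensor_id, LinearMap.id_apply,
    LinearMap.lTensor_comp, LinearMap.comp_apply, Coalgebra.lTensor_counit_comul,
    LinearMap.lTensor_tmul, LinearMap.toSpanSingleton_apply, one_smul]

theorem map_eAug_eAug_comul (x : H) :
    TensorProduct.map e e (Δ x) = Δ x - x ⊗ₜ u - u ⊗ₜ e x := by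
  rw [← LinearMap.lTensor_comp_rTensor, LinearMap.comp_apply, rTensor_eAug_comul, map_sub,
    lTensor_eAug_comul, LinearMap.lTensor_tmul]

theorem comul_eq_of_mem_corad_one {p : H} (hp : p ∈ corad Δ ε u 1) (hε : ε p = 0) :
    Δ p = p ⊗ₜ u + u ⊗ₜ p := by
  have hδ : δ 2 p = LinearMap.lTensor H (TensorProduct.rid R H).symm.toLinearMap
      (TensorProduct.map e e (Δ p)) := by
    rw [deltaPow_succ_apply]
    induction Δ p with
    | zero => rfl
    | tmul a b => rw [TensorProduct.map_tmul, deltaPow_one_apply, TensorProduct.map_tmul,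
        LinearMap.lTensor_tmul, LinearEquiv.coe_coe, TensorProduct.rid_symm_apply]; rfl
    | add s t hs ht => rw [map_add, hs, ht, map_add, map_add]; rfl
  have hp' : TensorProduct.map e e (Δ p) = 0 := by
    rw [LinearMap.mem_ker.mp hp] at hδ
    exact (LinearEquiv.lTensor H (TensorProduct.rid R H).symm).map_eq_zero_iff.mp hδ.symm
  have he : e p = p := by simp [eAug, hε]
  rw [map_eAug_eAug_comul, he, sub_sub, sub_eq_zero] at hp'
  exact hp'

end Coalgebra

section Bialgebra

variable {H : Type u} [Ring H] [Bialgebra R H]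

local notation "Δ" => Coalgebra.comul (R := R) (A := H)
local notation "ε" => Coalgebra.counit (R := R) (A := H)
local notation "e" => eAug ε (1 : H)
local notation "δ" => deltaPow Δ ε (1 : H)

theorem one_mem_corad (n : ℕ) : (1 : H) ∈ corad Δ ε 1 n := by
  rw [corad, LinearMap.mem_ker, deltaPow_succ_apply, Bialgebra.comul_one,
    Algebra.TensorProduct.one_def, TensorProduct.map_tmul]
  have he : e 1 = 0 := by simp [eAug]
  rw [he, TensorProduct.zero_tmul]
  rfl

theorem sub_counit_smul_one_mem_corad {x : H} {n : ℕ} (hx : x ∈ corad Δ ε 1 n) :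
    x - ε x • (1 : H) ∈ corad Δ ε 1 n :=
  sub_mem hx (Submodule.smul_mem _ _ (one_mem_corad n))

theorem eAug_mul_of_counit_eq_zero {p : H} (hε : ε p = 0) (x : H) :
    e (p * x) = p * e x + ε x • p := by
  simp only [eAug, LinearMap.sub_apply, LinearMap.id_apply, LinearMap.comp_apply,
    LinearMap.toSpanSingleton_apply, Bialgebra.counit_mul, hε, zero_mul, zero_smul, sub_zero,
    mul_sub, mul_smul_comm, mul_one]
  abel

theorem comul_mul_of_comul_eq {p : H} (hΔ : Δ p = p ⊗ₜ 1 + 1 ⊗ₜ p) (y : H) :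
    Δ (p * y) = LinearMap.rTensor H (LinearMap.mulLeft R p) (Δ y)
      + LinearMap.lTensor H (LinearMap.mulLeft R p) (Δ y) := by
  rw [Bialgebra.comul_mul, hΔ, add_mul, ← LinearMap.mulLeft_apply (R := R),
    ← LinearMap.mulLeft_apply (R := R) (1 ⊗ₜ p), LinearMap.mulLeft_tmul, LinearMap.mulLeft_tmul,
    LinearMap.mulLeft_one]
  rfl

theorem exists_deltaPow_succ_mul_eq {p : H} (hε : ε p = 0) (hΔ : Δ p = p ⊗ₜ 1 + 1 ⊗ₜ p)
    (N : ℕ) :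
    ∃ (M : Tpow R H (N + 1) →ₗ[R] Tpow R H (N + 1)) (J : Tpow R H N →ₗ[R] Tpow R H (N + 1)),
      ∀ y, δ (N + 1) (p * y) = M (δ (N + 1) y) + J (δ N y) := by
  induction N with
  | zero =>
    refine ⟨LinearMap.rTensor R (LinearMap.mulLeft R p), TensorProduct.mk R H R p, fun y ↦ ?_⟩
    rw [deltaPow_one_apply, deltaPow_one_apply, deltaPow_zero_apply]
    change e (p * y) ⊗ₜ[R] (1 : R)
      = LinearMap.rTensor R (LinearMap.mulLeft R p) (e y ⊗ₜ[R] (1 : R)) + p ⊗ₜ[R] ε y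
    rw [eAug_mul_of_counit_eq_zero hε, TensorProduct.add_tmul, LinearMap.rTensor_tmul,
      LinearMap.mulLeft_apply, TensorProduct.smul_tmul, smul_eq_mul, mul_one]
  | succ N ih =>
    obtain ⟨M, J, hMJ⟩ := ih
    refine ⟨LinearMap.rTensor (Tpow R H (N + 1)) (LinearMap.mulLeft R p) + LinearMap.lTensor H M,
      (show Tpow R H (N + 1) →ₗ[R] Tpow R H (N + 2) from TensorProduct.mk R H _ p)
        + (show Tpow R H (N + 1) →ₗ[R] Tpow R H (N + 2) from LinearMap.lTensor H J), fun y ↦ ?_⟩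
    have he : e ∘ₗ LinearMap.mulLeft R p
        = LinearMap.mulLeft R p ∘ₗ e + LinearMap.toSpanSingleton R H p ∘ₗ ε :=
      LinearMap.ext (eAug_mul_of_counit_eq_zero hε)
    have hr : TensorProduct.map e (δ (N + 1)) (LinearMap.rTensor H (LinearMap.mulLeft R p) (Δ y))
        = LinearMap.rTensor _ (LinearMap.mulLeft R p) (TensorProduct.map e (δ (N + 1)) (Δ y))
          + p ⊗ₜ δ (N + 1) y := by
      rw [← LinearMap.comp_apply, LinearMap.map_comp_rTensor, he, TensorProduct.map_add_left,
        LinearMap.add_apply, ← LinearMap.rTensor_comp_map, ← LinearMap.map_comp_rTensor,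
        LinearMap.comp_apply, LinearMap.comp_apply, Coalgebra.rTensor_counit_comul,
        TensorProduct.map_tmul, LinearMap.toSpanSingleton_apply, one_smul]
    have hl : TensorProduct.map e (δ (N + 1)) (LinearMap.lTensor H (LinearMap.mulLeft R p) (Δ y))
        = LinearMap.lTensor H M (TensorProduct.map e (δ (N + 1)) (Δ y))
          + LinearMap.lTensor H J (TensorProduct.map e (δ N) (Δ y)) := by
      have hδ : δ (N + 1) ∘ₗ LinearMap.mulLeft R p = M ∘ₗ δ (N + 1) + J ∘ₗ δ N :=
        LinearMap.ext hMJ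
      rw [← LinearMap.comp_apply, LinearMap.map_comp_lTensor, hδ, TensorProduct.map_add_right,
        LinearMap.add_apply, ← LinearMap.lTensor_comp_map, ← LinearMap.lTensor_comp_map,
        LinearMap.comp_apply, LinearMap.comp_apply]
    rw [deltaPow_succ_apply, comul_mul_of_comul_eq hΔ, map_add, hr, hl, ← deltaPow_succ_apply,
      ← deltaPow_succ_apply]
    change _ = LinearMap.rTensor _ (LinearMap.mulLeft R p) (δ (N + 2) y)
      + LinearMap.lTensor H M (δ (N + 2) y)
      + (p ⊗ₜ δ (N + 1) y + LinearMap.lTensor H J (δ (N + 1) y))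
    abel

theorem mul_mem_corad_succ {x y : H} {N : ℕ} (hx : x ∈ corad Δ ε 1 1) (hy : y ∈ corad Δ ε 1 N)
    (hy' : y ∈ corad Δ ε 1 (N + 1)) : x * y ∈ corad Δ ε 1 (N + 1) := by
  set p := x - ε x • (1 : H)
  have hεp : ε p = 0 := by simp [p]
  obtain ⟨M, J, hMJ⟩ := exists_deltaPow_succ_mul_eq hεp
    (comul_eq_of_mem_corad_one (sub_counit_smul_one_mem_corad hx) hεp) (N + 1)
  have hxy : x * y = p * y + ε x • y := by simp [p, sub_mul]
  rw [corad, LinearMap.mem_ker] at hy hy' ⊢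
  rw [hxy, map_add, map_smul, hMJ, hy, hy', map_zero, map_zero, add_zero, smul_zero, add_zero]

theorem corad_one_pow_le {n N : ℕ} (h : n ≤ N) : corad Δ ε 1 1 ^ n ≤ corad Δ ε 1 N := by
  induction n generalizing N with
  | zero => exact Submodule.one_le.mpr (one_mem_corad N)
  | succ n ih =>
    obtain ⟨N, rfl⟩ : ∃ M, N = M + 1 := ⟨N - 1, by omega⟩
    rw [pow_succ']
    exact Submodule.mul_le.mpr fun x hx y hy ↦
      mul_mem_corad_succ hx (ih (by omega) hy) (ih (by omega) hy)

end Bialgebra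

/-- For a bialgebra `H` over a commutative ring, the coradical filtration contains the
primitive filtration: `P_1(H)^n ⊆ P_n(H)`. -/
theorem stmt12 {R : Type u} [CommRing R] {H : Type u} [Ring H] [Bialgebra R H] (n : ℕ) :
    (corad (Coalgebra.comul (R := R) (A := H))
        (Coalgebra.counit (R := R) (A := H)) (1 : H) 1) ^ n
      ≤ corad (Coalgebra.comul (R := R) (A := H))
        (Coalgebra.counit (R := R) (A := H)) (1 : H) n :=
  corad_one_pow_le le_rfl
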